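/- Let G be a cubic graph and let F be a 1-factor (perfect matching) of G. Then there exists a maximum 3-edge-colorable subgraph H of G such that E(F) ⊆ E(H). -/

import Mathlib

/-- A multigraph on vertex type `V` with edge type `E`: each edge has a pair of
endpoints (an element of `Sym2 V`), and there are no loops.  Multiple edges
(distinct edges with the same endpoints) are allowed. -/
structure Multigraph (V : Type) (E : Type) where
  ends : E → Sym2 V
  no_loops : ∀ e : E, ¬ (ends e).IsDiag

namespace Multigraph

variable {V E : Type}

/-- The degree of a vertex `v` inside the set `S` of edges:
the number of edges of `S` incident to `v`. -/
noncomputable def degreeIn (G : Multigraph V E) (S : Set E) (v : V) : ℕ :=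
  {e ∈ S | v ∈ G.ends e}.ncard

/-- The degree of a vertex: the number of edges incident to it. -/
noncomputable def degree (G : Multigraph V E) (v : V) : ℕ :=
  G.degreeIn Set.univ v

/-- A cubic graph: every vertex has degree exactly `3`. -/
def IsCubic (G : Multigraph V E) : Prop :=
  ∀ v : V, G.degree v = 3

/-- Two edges are adjacent if they share an endpoint. -/
def EdgeAdj (G : Multigraph V E) (e f : E) : Prop :=
  ∃ v : V, v ∈ G.ends e ∧ v ∈ G.ends f

/-- A set of edges is a matching if no two distinct edges of it share an endpoint. -/
def IsMatching (G : Multigraph V E) (M : Set E) : Prop :=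
  ∀ e ∈ M, ∀ f ∈ M, e ≠ f → ¬ G.EdgeAdj e f

/-- A perfect matching (`1`-factor): a matching covering every vertex. -/
def IsPerfectMatching (G : Multigraph V E) (F : Set E) : Prop :=
  G.IsMatching F ∧ ∀ v : V, ∃ e ∈ F, v ∈ G.ends e

/-- A `2`-factor: a spanning subgraph in which every vertex has degree exactly `2`. -/
def Is2Factor (G : Multigraph V E) (F : Set E) : Prop :=
  ∀ v : V, G.degreeIn F v = 2

/-- `c` is a proper edge coloring of the (spanning) subgraph with edge set `S`:
distinct adjacent edges of `S` get distinct colors. -/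
def IsProperColoring (G : Multigraph V E) (S : Set E) {k : ℕ} (c : E → Fin k) : Prop :=
  ∀ e ∈ S, ∀ f ∈ S, e ≠ f → G.EdgeAdj e f → c e ≠ c f

/-- The (spanning) subgraph with edge set `S` is `k`-edge-colorable. -/
def Colorable (G : Multigraph V E) (k : ℕ) (S : Set E) : Prop :=
  ∃ c : E → Fin k, G.IsProperColoring S c

/-- `H` is (the edge set of) a maximum `k`-edge-colorable subgraph of `G`. -/
def IsMaxColorable (G : Multigraph V E) (k : ℕ) (H : Set E) : Prop :=
  G.Colorable k H ∧ ∀ S : Set E, G.Colorable k S → S.ncard ≤ H.ncard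

/-- `ν_k(G)`: the number of edges of a maximum `k`-edge-colorable subgraph of `G`. -/
noncomputable def nu (G : Multigraph V E) (k : ℕ) : ℕ :=
  sSup {n : ℕ | ∃ S : Set E, G.Colorable k S ∧ S.ncard = n}

/-- The set of colors appearing (under the coloring `c` of the subgraph `H`)
on the edges of `H` incident to the vertex `w`. -/
def colorsAt (G : Multigraph V E) (H : Set E) {k : ℕ} (c : E → Fin k) (w : V) :
    Set (Fin k) :=
  {γ : Fin k | ∃ f ∈ H, w ∈ G.ends f ∧ c f = γ}

end Multigraph

/-!
Choose a maximum 3-edge-colorable subgraph `H` with as many edges of `F` as possible, and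
suppose an edge `e = uv` of `F` is missing from `H`. Only two edges of `H` meet `v`, so some
color `β` is free at `v`. If `β` is free at `u` as well, `e` can be added to `H` with color `β`,
contradicting maximality. Otherwise the unique `β`-edge `f` at `u` can be replaced by `e`; since
`F` is a matching, `f ∉ F`, so the new maximum subgraph contains more edges of `F`.
-/

namespace Multigraph

variable {V E : Type} {G : Multigraph V E} {k : ℕ} {H S : Set E} {c : E → Fin k}
  {e f : E} {u v : V}

theorem colorsAt_mono (h : S ⊆ H) (w : V) : G.colorsAt S c w ⊆ G.colorsAt H c w :=
  fun _ ⟨g, hg, hgw, hcg⟩ => ⟨g, h hg, hgw, hcg⟩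

theorem IsProperColoring.mono (hc : G.IsProperColoring H c) (h : S ⊆ H) :
    G.IsProperColoring S c :=
  fun g hg g' hg' => hc g (h hg) g' (h hg')

theorem IsProperColoring.notMem_colorsAt_sdiff_singleton (hc : G.IsProperColoring H c)
    (hf : f ∈ H) (hu : u ∈ G.ends f) : c f ∉ G.colorsAt (H \ {f}) c u :=
  fun ⟨g, ⟨hgH, hgf⟩, hgu, hcg⟩ => hc g hgH f hf hgf ⟨u, hgu, hu⟩ hcg

theorem IsProperColoring.update_insert [DecidableEq E] (hc : G.IsProperColoring H c) {β : Fin k}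
    (hβ : ∀ w ∈ G.ends e, β ∉ G.colorsAt H c w) :
    G.IsProperColoring (insert e H) (Function.update c e β) := by
  have hfree : ∀ g ∈ H, ∀ w ∈ G.ends e, w ∈ G.ends g → c g ≠ β :=
    fun g hg w hwe hwg hcg => hβ w hwe ⟨g, hg, hwg, hcg⟩
  intro g hg g' hg' hne ⟨w, hwg, hwg'⟩
  rw [Set.mem_insert_iff] at hg hg'
  by_cases hge : g = e
  · subst hge
    rw [Function.update_self, Function.update_of_ne hne.symm]
    exact (hfree g' (hg'.resolve_left hne.symm) w hwg hwg').symm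
  by_cases hge' : g' = e
  · subst hge'
    rw [Function.update_self, Function.update_of_ne hge]
    exact hfree g (hg.resolve_left hge) w hwg' hwg
  rw [Function.update_of_ne hge, Function.update_of_ne hge']
  exact hc g (hg.resolve_left hge) g' (hg'.resolve_left hge') hne ⟨w, hwg, hwg'⟩

/-- Only the at most `k - 1` edges at `v` other than `e` can carry colors there. -/
theorem exists_notMem_colorsAt [Finite E] (hdeg : G.degree v ≤ k) (c : E → Fin k)
    (he : e ∉ H) (hv : v ∈ G.ends e) : ∃ β, β ∉ G.colorsAt H c v := by
  set star : Set E := {f | v ∈ G.ends f}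
  have hstar : star.ncard ≤ k := by simpa [degree, degreeIn, star] using hdeg
  have hsub : G.colorsAt H c v ⊆ c '' (star \ {e}) := by
    rintro _ ⟨f, hfH, hfv, rfl⟩
    exact ⟨f, ⟨hfv, fun hfe => he (hfe ▸ hfH)⟩, rfl⟩
  have hlt : (G.colorsAt H c v).ncard < Nat.card (Fin k) := calc
    (G.colorsAt H c v).ncard ≤ (c '' (star \ {e})).ncard := Set.ncard_le_ncard hsub
    _ ≤ (star \ {e}).ncard := Set.ncard_image_le
    _ < star.ncard := Set.ncard_sdiff_singleton_lt_of_mem hv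
    _ ≤ Nat.card (Fin k) := by simpa using hstar
  by_contra! hall
  rw [Set.eq_univ_of_forall hall, Set.ncard_univ] at hlt
  exact hlt.false

/-- The recoloring step: with `β` free at the other end `v` of `e`, either `β` is free at `u`
too, or the unique `β`-edge `f` at `u` can be traded for `e`. -/
theorem colorable_insert_or_exchange [Finite E] (hdeg : ∀ v, G.degree v ≤ k)
    (hH : G.Colorable k H) (he : e ∉ H) (hu : u ∈ G.ends e) :
    G.Colorable k (insert e H) ∨
      ∃ f ∈ H, u ∈ G.ends f ∧ G.Colorable k (insert e (H \ {f})) := by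
  classical
  obtain ⟨c, hc⟩ := hH
  have hends : ∀ w ∈ G.ends e, w = u ∨ w = Sym2.Mem.other hu := by
    intro w hw
    rw [← Sym2.other_spec hu] at hw
    exact Sym2.mem_iff.mp hw
  obtain ⟨β, hβv⟩ := exists_notMem_colorsAt (hdeg _) c he (Sym2.other_mem hu)
  by_cases hβu : β ∈ G.colorsAt H c u
  · obtain ⟨f, hfH, hfu, rfl⟩ := hβu
    refine Or.inr ⟨f, hfH, hfu, _, (hc.mono Set.sdiff_subset).update_insert (β := c f) ?_⟩
    intro w hw
    rcases hends w hw with rfl | rfl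
    · exact hc.notMem_colorsAt_sdiff_singleton hfH hfu
    · exact fun h => hβv (colorsAt_mono Set.sdiff_subset _ h)
  · refine Or.inl ⟨_, hc.update_insert (β := β) fun w hw => ?_⟩
    rcases hends w hw with rfl | rfl
    exacts [hβu, hβv]

theorem exists_isMaxColorable [Finite E] (G : Multigraph V E) (k : ℕ) [NeZero k] :
    ∃ H, G.IsMaxColorable k H := by
  obtain ⟨H, hH, hHmax⟩ := Set.exists_max_image {S | G.Colorable k S} Set.ncard
    (Set.toFinite _) ⟨∅, fun _ => 0, fun _ h => h.elim⟩
  exact ⟨H, hH, hHmax⟩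

theorem IsMaxColorable.not_colorable_insert [Finite E] (hH : G.IsMaxColorable k H)
    (he : e ∉ H) : ¬ G.Colorable k (insert e H) := fun hins => by
  have := hH.2 _ hins
  rw [Set.ncard_insert_of_notMem he] at this
  omega

theorem IsMaxColorable.exchange [Finite E] (hH : G.IsMaxColorable k H) (he : e ∉ H)
    (hf : f ∈ H) (hexch : G.Colorable k (insert e (H \ {f}))) :
    G.IsMaxColorable k (insert e (H \ {f})) :=
  ⟨hexch, fun S hS => (Set.ncard_exchange he hf).symm ▸ hH.2 S hS⟩

end Multigraph

theorem one_factor_extends_to_max_three_colorable_general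
    {V E : Type} [Fintype E] (G : Multigraph V E) (hG : G.IsCubic)
    (F : Set E) (hF : G.IsPerfectMatching F) :
    ∃ H : Set E, G.IsMaxColorable 3 H ∧ F ⊆ H := by
  obtain ⟨H, hH, hHbest⟩ := Set.exists_max_image {H | G.IsMaxColorable 3 H}
    (fun H => (H ∩ F).ncard) (Set.toFinite _) (G.exists_isMaxColorable 3)
  refine ⟨H, hH, fun e he => by_contra fun heH => ?_⟩
  have hu := (G.ends e).out_fst_mem
  rcases G.colorable_insert_or_exchange (fun v => (hG v).le) hH.1 heH hu with
    hins | ⟨f, hfH, hfu, hexch⟩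
  · exact hH.not_colorable_insert heH hins
  have hfF : f ∉ F := fun hfF =>
    hF.1 e he f hfF (fun hef => heH (hef ▸ hfH)) ⟨_, hu, hfu⟩
  have hgain : (insert e (H \ {f}) ∩ F).ncard = (H ∩ F).ncard + 1 := by
    rw [Set.insert_inter_of_mem he, Set.sdiff_inter_right_comm,
      Set.sdiff_singleton_eq_self fun h => hfF h.2]
    exact Set.ncard_insert_of_notMem fun h => heH h.1
  have := hHbest _ (hH.exchange heH hfH hexch)
  omega

/-- Any 1-factor (perfect matching) of a cubic graph `G` can be
extended to a maximum 3-edge-colorable subgraph of `G`. -/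
theorem one_factor_extends_to_max_three_colorable
    {V E : Type} [Fintype V] [Fintype E] (G : Multigraph V E) (hG : G.IsCubic)
    (F : Set E) (hF : G.IsPerfectMatching F) :
    ∃ H : Set E, G.IsMaxColorable 3 H ∧ F ⊆ H :=
  one_factor_extends_to_max_three_colorable_general G hG F hF
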